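/- Let n ≥ 2 be even and let 0 ≤ r ≤ n−1 be an integer. Write w_n^I = ((λ_1,ρ_1),…,(λ_κ,ρ_κ)) (so λ_1 = n−1). Then the number of positive normal forms on n of the shape ((l_1',ρ_1),…,(l_κ',ρ_κ)) with l_i' ≤ λ_i for all i and l_1' = n−1−r equals C(n−2−r, r), where C denotes the blobbed Catalan triangle. (This is the number i_{n,r} of grids obtained from G(w_n^I) by adding dots exclusively on its left, keeping affine length one, with exactly r dots added in the leftmost non-empty column.) -/

import Mathlib

/-- Auxiliary (index-shifted) version of the blobbed Catalan triangle:
`blobbedCAux (i+1) (j+1) = C(i,j)`. -/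
def blobbedCAux : ℕ → ℕ → ℕ
  | 0, j => if j % 2 = 0 then 1 else 0
  | 1, j => if j % 2 = 1 then 1 else 0
  | _ + 2, 0 => 0
  | i + 2, j + 1 => blobbedCAux (i + 1) j + blobbedCAux (i + 1) (j + 2)

/-- The blobbed Catalan triangle `C(i,j)`, defined for integers `i, j ≥ -1`:
`C(i,j) = 1` if `i ∈ {-1,0}` and `i+j` is even, `C(i,j) = 0` if `i ∈ {-1,0}` and `i+j`
is odd, `C(i,-1) = 0` for `i ≥ 1`, and `C(i,j) = C(i-1,j-1) + C(i-1,j+1)` for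
`i ≥ 1`, `j ≥ 0`. -/
def blobbedC (i j : ℤ) : ℕ := blobbedCAux (i + 1).toNat (j + 1).toNat

/-- `w` is a positive normal form on `n`: a sequence of blocks `(l_i, r_i)` with
`n ≥ l_1 ≥ … ≥ l_k ≥ 0`, `n ≥ r_1 ≥ … ≥ r_k ≥ 0`, `l_i ≤ r_i` for all `i`,
where `l` may repeat (consecutively) only at the value `0` and `r` may repeat only
at the value `n`. -/
def IsPNF (n : ℤ) (w : List (ℤ × ℤ)) : Prop :=
  (∀ p ∈ w, 0 ≤ p.1 ∧ p.1 ≤ p.2 ∧ p.2 ≤ n) ∧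
  List.Chain' (fun p q : ℤ × ℤ =>
    q.1 ≤ p.1 ∧ q.2 ≤ p.2 ∧ (q.1 = p.1 → p.1 = 0) ∧ (q.2 = p.2 → p.2 = n)) w

/-- The affine length of a normal form: the number of blocks whose right endpoint is `n`. -/
def affineLength (n : ℤ) (w : List (ℤ × ℤ)) : ℕ :=
  w.countP (fun p => p.2 = n)

/-- `numPNF n s` is the number `a(n,s)` of positive normal forms on `n` of affine length `s`. -/
noncomputable def numPNF (n : ℤ) (s : ℕ) : ℕ :=
  Nat.card {w : List (ℤ × ℤ) // IsPNF n w ∧ affineLength n w = s}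

/-- The grid of a normal form `((l_1,r_1),…,(l_k,r_k))`:
`{(i,j) ∈ ℤ² : 1 ≤ i ≤ k, l_i ≤ j ≤ r_i}`. -/
def grid (w : List (ℤ × ℤ)) : Set (ℤ × ℤ) :=
  {p | ∃ i : ℕ, i < w.length ∧ p.1 = (i : ℤ) + 1 ∧
    (w.getD i (0, 0)).1 ≤ p.2 ∧ p.2 ≤ (w.getD i (0, 0)).2}

/-- `G` contains a horizontal translate of `G'`. -/
def ContainsTranslate (G G' : Set (ℤ × ℤ)) : Prop :=
  ∃ m : ℤ, ∀ p ∈ G', ((p.1 + m, p.2) : ℤ × ℤ) ∈ G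

/-- The normal form `w_n^I`. -/
def wI (n : ℤ) : List (ℤ × ℤ) :=
  if n = 1 then [(1, 1), (0, 1)]
  else if Even n then
    (n - 1, n) :: (((List.range ((n - 2) / 2).toNat).map
      fun t : ℕ => (n - 3 - 2 * (t : ℤ), n - 1 - 2 * (t : ℤ))) ++ [(0, 1)])
  else
    (n, n) :: (n - 2, n) :: (((List.range ((n - 3) / 2).toNat).map
      fun t : ℕ => (n - 4 - 2 * (t : ℤ), n - 2 - 2 * (t : ℤ))) ++ [(0, 1)])

/-- The normal form `w_n^J`. -/
def wJ (n : ℤ) : List (ℤ × ℤ) :=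
  if Even n then
    (n, n) :: (n - 2, n) :: (((List.range ((n - 2) / 2).toNat).map
      fun t : ℕ => (n - 4 - 2 * (t : ℤ), n - 2 - 2 * (t : ℤ))) ++ [(0, 0)])
  else
    (n - 1, n) :: (((List.range ((n - 1) / 2).toNat).map
      fun t : ℕ => (n - 3 - 2 * (t : ℤ), n - 1 - 2 * (t : ℤ))) ++ [(0, 0)])

/-- `numBadPNF n s` is the number `d(n,s)` of positive normal forms on `n` of affine
length `s` whose grid contains a horizontal translate of `G(w_n^I)` or of `G(w_n^J)`. -/
noncomputable def numBadPNF (n : ℤ) (s : ℕ) : ℕ :=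
  Nat.card {w : List (ℤ × ℤ) // IsPNF n w ∧ affineLength n w = s ∧
    (ContainsTranslate (grid w) (grid (wI n)) ∨ ContainsTranslate (grid w) (grid (wJ n)))}

/-!
The right endpoints of `w_n^I` strictly decrease and exceed its left endpoints, so a lowering
of `w_n^I` is a positive normal form exactly when its left endpoints are nonnegative and strictly
decrease until they reach `0`. For `n = 2m + 2`, let `L(m, c)` count the admissible left endpoints
of the blocks after the first one, given that the first block starts at `c`. Raising `c` by one
adds exactly the choice `c` for the second block, so `L(m+1, c+1) = L(m+1, c) + L(m, c)`; this is
the recursion of the blobbed Catalan triangle, and `L(m, c) = C(c - 1, 2m + 1 - c)`.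
-/

theorem blobbedC_eq_one_of_even {i j : ℤ} (hi : i = -1 ∨ i = 0) (hj : -1 ≤ j)
    (hij : Even (i + j)) : blobbedC i j = 1 := by
  obtain ⟨k, hk⟩ := hij
  rcases hi with rfl | rfl
  · rw [blobbedC, show (-1 + 1 : ℤ).toNat = 0 from rfl, blobbedCAux, if_pos (by omega)]
  · rw [blobbedC, show (0 + 1 : ℤ).toNat = 1 from rfl, blobbedCAux, if_pos (by omega)]

theorem blobbedC_neg_one_right {i : ℤ} (hi : 1 ≤ i) : blobbedC i (-1) = 0 := by
  obtain ⟨k, hk⟩ : ∃ k : ℕ, i + 1 = k + 2 := ⟨(i - 1).toNat, by omega⟩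
  rw [blobbedC, hk, show (-1 + 1 : ℤ).toNat = 0 from rfl,
    show ((k : ℤ) + 2).toNat = k + 2 by omega, blobbedCAux]

theorem blobbedC_eq_add {i j : ℤ} (hi : 1 ≤ i) (hj : 0 ≤ j) :
    blobbedC i j = blobbedC (i - 1) (j - 1) + blobbedC (i - 1) (j + 1) := by
  simp only [blobbedC, show (i + 1).toNat = (i - 1).toNat + 2 by omega,
    show (j + 1).toNat = j.toNat + 1 by omega, show (j - 1 + 1).toNat = j.toNat by omega,
    show (i - 1 + 1).toNat = (i - 1).toNat + 1 by omega,
    show (j + 1 + 1).toNat = j.toNat + 2 by omega, blobbedCAux]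

theorem List.forall₂_iff_getD {α β : Type*} {R : α → β → Prop} {l₁ : List α} {l₂ : List β}
    (d₁ : α) (d₂ : β) : Forall₂ R l₁ l₂ ↔
      l₁.length = l₂.length ∧ ∀ i < l₂.length, R (l₁.getD i d₁) (l₂.getD i d₂) := by
  rw [forall₂_iff_get]
  refine and_congr_right fun h => ⟨fun H i hi => ?_, fun H i h₁ h₂ => ?_⟩
  · simpa [getD_eq_getElem, hi, h ▸ hi] using H i (h ▸ hi) hi
  · simpa [getD_eq_getElem, h₁, h₂] using H i h₂

theorem List.IsChain.and {α : Type*} {R S : α → α → Prop} {l : List α} (hR : l.IsChain R)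
    (hS : l.IsChain S) : l.IsChain fun a b => R a b ∧ S a b := by
  induction l using List.twoStepInduction <;> grind

def LeftStep (a b : ℤ) : Prop := b ≤ a ∧ (b = a → a = 0)

instance : DecidableRel LeftStep := fun _ _ => instDecidableAnd

theorem isPNF_iff_of_forall₂ {n : ℤ} {w u : List (ℤ × ℤ)}
    (hw : w.Forall₂ (fun p q => p.2 = q.2 ∧ p.1 ≤ q.1) u)
    (hu : ∀ q ∈ u, q.1 ≤ q.2 ∧ q.2 ≤ n) (hsnd : (u.map Prod.snd).IsChain (· > ·)) :
    IsPNF n w ↔ (∀ p ∈ w, 0 ≤ p.1) ∧ (w.map Prod.fst).IsChain LeftStep := by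
  have hw_le : ∀ p ∈ w, p.1 ≤ p.2 ∧ p.2 ≤ n := by
    clear hsnd
    induction hw with
    | nil => simp
    | cons h _ ih =>
      simp only [List.forall_mem_cons] at hu ⊢
      exact ⟨by omega, ih hu.2⟩
  have hw_snd : w.map Prod.snd = u.map Prod.snd := by
    rw [← List.forall₂_eq_eq_eq, List.forall₂_map_left_iff, List.forall₂_map_right_iff]
    exact hw.imp fun _ _ h => h.1
  rw [← hw_snd, List.isChain_map] at hsnd
  rw [IsPNF, List.Chain', List.isChain_map]
  constructor
  · rintro ⟨h0, hch⟩
    exact ⟨fun p hp => (h0 p hp).1, hch.imp fun p q h => ⟨h.1, h.2.2.1⟩⟩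
  · rintro ⟨h0, hch⟩
    refine ⟨fun p hp => ⟨h0 p hp, hw_le p hp⟩, (hch.and hsnd).imp fun p q h => ?_⟩
    exact ⟨h.1.1, h.2.le, h.1.2, fun e => absurd e h.2.ne⟩

noncomputable def lowerings : List (ℤ × ℤ) → ℤ → Finset (List (ℤ × ℤ))
  | [], _ => {[]}
  | q :: u, c => ((Finset.Icc 0 q.1).filter (LeftStep c)).biUnion fun v =>
      (lowerings u v).image ((v, q.2) :: ·)

theorem mem_lowerings {u w : List (ℤ × ℤ)} {c : ℤ} :
    w ∈ lowerings u c ↔ w.Forall₂ (fun p q => 0 ≤ p.1 ∧ p.2 = q.2 ∧ p.1 ≤ q.1) u ∧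
      (c :: w.map Prod.fst).IsChain LeftStep := by
  induction u generalizing w c with
  | nil => cases w <;> simp [lowerings]
  | cons q u ih =>
    rcases w with _ | ⟨p, w⟩
    · simp [lowerings]
    · simp only [lowerings, Finset.mem_biUnion, Finset.mem_filter, Finset.mem_Icc,
        Finset.mem_image, List.cons.injEq, ih, List.forall₂_cons, List.map_cons,
        List.isChain_cons_cons]
      constructor
      · rintro ⟨v, ⟨⟨hv0, hvq⟩, hcv⟩, w', ⟨hw', hch⟩, rfl, rfl⟩
        exact ⟨⟨⟨hv0, rfl, hvq⟩, hw'⟩, hcv, hch⟩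
      · rintro ⟨⟨⟨hp0, hp2, hpq⟩, hw⟩, hcp, hch⟩
        exact ⟨p.1, ⟨⟨hp0, hpq⟩, hcp⟩, w, ⟨hw, hch⟩, by rw [← hp2], rfl⟩

theorem card_lowerings_cons (q : ℤ × ℤ) (u : List (ℤ × ℤ)) (c : ℤ) :
    (lowerings (q :: u) c).card =
      ∑ v ∈ (Finset.Icc 0 q.1).filter (LeftStep c), (lowerings u v).card := by
  rw [lowerings, Finset.card_biUnion]
  · exact Finset.sum_congr rfl fun v _ => Finset.card_image_of_injective _ List.cons_injective
  · intro v _ v' _ hne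
    simp only [Function.onFun, Finset.disjoint_left, Finset.mem_image]
    rintro _ ⟨w, -, rfl⟩ ⟨w', -, h⟩
    exact hne (Prod.ext_iff.mp (List.cons.inj h).1).1.symm

theorem lowerings_one (u : List (ℤ × ℤ)) : lowerings u 1 = lowerings u 0 := by
  have h : LeftStep 1 = LeftStep 0 := by
    funext v
    simp only [LeftStep, eq_iff_iff, implies_true, and_true]
    omega
  cases u <;> simp only [lowerings, h]

theorem card_lowerings_zero {u : List (ℤ × ℤ)} (hu : ∀ q ∈ u, 0 ≤ q.1) :
    (lowerings u 0).card = 1 := by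
  induction u with
  | nil => rfl
  | cons q u ih =>
    obtain ⟨hq, hu⟩ := List.forall_mem_cons.mp hu
    have h : (Finset.Icc 0 q.1).filter (LeftStep 0) = {0} := by
      ext v
      simp only [Finset.mem_filter, Finset.mem_Icc, Finset.mem_singleton, LeftStep,
        implies_true, and_true]
      omega
    rw [card_lowerings_cons, h, Finset.sum_singleton, ih hu]

theorem card_lowerings_cons_add_one {q : ℤ × ℤ} {c : ℤ} (u : List (ℤ × ℤ)) (hc1 : 1 ≤ c)
    (hc : c ≤ q.1) :
    (lowerings (q :: u) (c + 1)).card =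
      (lowerings (q :: u) c).card + (lowerings u c).card := by
  have h : (Finset.Icc 0 q.1).filter (LeftStep (c + 1)) =
      insert c ((Finset.Icc 0 q.1).filter (LeftStep c)) := by
    ext v
    simp only [Finset.mem_filter, Finset.mem_Icc, Finset.mem_insert, LeftStep]
    omega
  rw [card_lowerings_cons, card_lowerings_cons, h, Finset.sum_insert, add_comm]
  simp only [Finset.mem_filter, Finset.mem_Icc, LeftStep, le_refl, true_implies]
  omega

theorem lowerings_cons_add_one_of_lt {q : ℤ × ℤ} {c : ℤ} (u : List (ℤ × ℤ)) (hc : q.1 < c) :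
    lowerings (q :: u) (c + 1) = lowerings (q :: u) c := by
  have h : (Finset.Icc 0 q.1).filter (LeftStep (c + 1)) =
      (Finset.Icc 0 q.1).filter (LeftStep c) := by
    ext v
    simp only [Finset.mem_filter, Finset.mem_Icc, LeftStep]
    omega
  rw [lowerings, lowerings, h]

theorem isPNF_and_forall₂_iff_mem_image_lowerings {n c : ℤ} {q : ℤ × ℤ}
    {t w : List (ℤ × ℤ)} (hu : ∀ p ∈ q :: t, p.1 ≤ p.2 ∧ p.2 ≤ n)
    (hsnd : ((q :: t).map Prod.snd).IsChain (· > ·)) (hc0 : 0 ≤ c) (hc : c ≤ q.1) :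
    (IsPNF n w ∧ w.Forall₂ (fun p q => p.2 = q.2 ∧ p.1 ≤ q.1) (q :: t) ∧
        (w.getD 0 (0, 0)).1 = c) ↔
      w ∈ (lowerings t c).image ((c, q.2) :: ·) := by
  rcases w with _ | ⟨p, w⟩
  · simp
  simp only [Finset.mem_image, List.cons.injEq, mem_lowerings, List.getD_cons_zero]
  constructor
  · rintro ⟨hpnf, hw, rfl⟩
    rw [isPNF_iff_of_forall₂ hw hu hsnd, List.forall_mem_cons, List.map_cons] at hpnf
    obtain ⟨⟨hp2, -⟩, hw⟩ := List.forall₂_cons.mp hw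
    refine ⟨w, ⟨?_, hpnf.2⟩, Prod.ext rfl hp2.symm, rfl⟩
    exact (List.forall₂_and_left _ _).mpr ⟨hpnf.1.2, hw⟩
  · rintro ⟨w, ⟨hw, hch⟩, rfl, rfl⟩
    obtain ⟨hw0, hw⟩ := (List.forall₂_and_left _ _).mp hw
    have hw : ((c, q.2) :: w).Forall₂ (fun p q => p.2 = q.2 ∧ p.1 ≤ q.1) (q :: t) :=
      List.Forall₂.cons ⟨rfl, hc⟩ hw
    refine ⟨(isPNF_iff_of_forall₂ hw hu hsnd).mpr ⟨?_, hch⟩, hw, rfl⟩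
    exact List.forall_mem_cons.mpr ⟨hc0, hw0⟩

def wITail : ℕ → List (ℤ × ℤ)
  | 0 => [(0, 1)]
  | m + 1 => (2 * m + 1, 2 * m + 3) :: wITail m

theorem map_range_append_eq_wITail (m : ℕ) :
    (List.range m).map (fun t : ℕ => (2 * (m : ℤ) - 1 - 2 * t, 2 * (m : ℤ) + 1 - 2 * t)) ++
      [(0, 1)] = wITail m := by
  induction m with
  | zero => rfl
  | succ m ih =>
    rw [List.range_succ_eq_map, List.map_cons, List.map_map, List.cons_append, wITail, ← ih]
    congr 2
    · push_cast; ring_nf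
    · refine List.map_congr_left fun t _ => ?_
      simp only [Function.comp_apply, Prod.mk.injEq]
      push_cast
      constructor <;> ring

theorem wI_of_eq_two_mul_add_two {n : ℤ} {m : ℕ} (hn : n = 2 * m + 2) :
    wI n = (n - 1, n) :: wITail m := by
  unfold wI
  rw [if_neg (by omega), if_pos ⟨m + 1, by omega⟩, ← map_range_append_eq_wITail,
    show ((n - 2) / 2).toNat = m by omega]
  congr 3
  funext t
  subst hn
  ring_nf

theorem wITail_bounds (m : ℕ) : ∀ q ∈ wITail m, 0 ≤ q.1 ∧ q.1 ≤ q.2 ∧ q.2 ≤ 2 * m + 1 := by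
  induction m with
  | zero => simp [wITail]
  | succ m ih =>
    simp only [wITail, List.forall_mem_cons]
    refine ⟨by omega, fun q hq => ?_⟩
    have := ih q hq
    push_cast
    omega

theorem isChain_snd_wITail (m : ℕ) {a : ℤ} (ha : 2 * m + 1 < a) :
    (a :: (wITail m).map Prod.snd).IsChain (· > ·) := by
  induction m generalizing a with
  | zero => simpa [wITail] using ha
  | succ m ih =>
    simp only [wITail, List.map_cons, List.isChain_cons_cons]
    push_cast at ha ⊢
    exact ⟨ha, ih (by omega)⟩

theorem card_lowerings_wITail (m : ℕ) {c : ℤ} (hc0 : 0 ≤ c) (hc : c ≤ 2 * m + 1) :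
    (lowerings (wITail m) c).card = blobbedC (c - 1) (2 * m + 1 - c) := by
  have hzero : ∀ m : ℕ, (lowerings (wITail m) 0).card = 1 := fun m =>
    card_lowerings_zero fun q hq => (wITail_bounds m q hq).1
  induction m generalizing c with
  | zero =>
    obtain rfl | rfl : c = 0 ∨ c = 1 := by omega
    · rw [hzero, blobbedC_eq_one_of_even (by norm_num) (by norm_num) (by decide)]
    · rw [lowerings_one, hzero, blobbedC_eq_one_of_even (by norm_num) (by norm_num) (by decide)]
  | succ m ih =>
    push_cast at hc ⊢
    induction c, hc0 using Int.leInduction with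
    | base =>
      rw [hzero, blobbedC_eq_one_of_even (by norm_num) (by omega) ⟨m + 1, by ring⟩]
    | succ c hc0 ihc =>
      obtain rfl | ⟨hc1, hcm⟩ | rfl : c = 0 ∨ (1 ≤ c ∧ c ≤ 2 * m + 1) ∨ c = 2 * m + 2 := by
        omega
      · rw [zero_add, lowerings_one, hzero,
          blobbedC_eq_one_of_even (by norm_num) (by omega) ⟨m + 1, by ring⟩]
      · rw [wITail, card_lowerings_cons_add_one _ hc1 (by omega), ← wITail, ihc (by omega),
          ih hc0 hcm, add_comm, blobbedC_eq_add (i := c + 1 - 1) (by omega) (by omega)]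
        congr 1 <;> congr 1 <;> ring
      · rw [wITail, lowerings_cons_add_one_of_lt _ (by omega), ← wITail, ihc (by omega),
          blobbedC_eq_add (i := 2 * m + 2 + 1 - 1) (by omega) (by omega),
          show 2 * ((m : ℤ) + 1) + 1 - (2 * m + 2 + 1) - 1 = -1 by ring,
          blobbedC_neg_one_right (by omega), zero_add]
        congr 1 <;> ring

theorem count_lowerings_wI_general (n r : ℤ) (hev : Even n)
    (hr0 : 0 ≤ r) (hr : r ≤ n - 1) :
    Nat.card {w : List (ℤ × ℤ) // IsPNF n w ∧ w.length = (wI n).length ∧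
      (∀ i < (wI n).length, (w.getD i (0, 0)).2 = ((wI n).getD i (0, 0)).2 ∧
        (w.getD i (0, 0)).1 ≤ ((wI n).getD i (0, 0)).1) ∧
      (w.getD 0 (0, 0)).1 = n - 1 - r} = blobbedC (n - 2 - r) r := by
  obtain ⟨m, hm⟩ : ∃ m : ℕ, n = 2 * m + 2 := by
    obtain ⟨k, hk⟩ := hev
    exact ⟨(k - 1).toNat, by omega⟩
  have hu : ∀ p ∈ (n - 1, n) :: wITail m, p.1 ≤ p.2 ∧ p.2 ≤ n :=
    List.forall_mem_cons.mpr ⟨by omega, fun q hq => by have := wITail_bounds m q hq; omega⟩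
  have hsnd := isChain_snd_wITail m (a := n) (by omega)
  rw [Nat.card_congr (Equiv.subtypeEquivRight
      (q := (· ∈ (lowerings (wITail m) (n - 1 - r)).image ((n - 1 - r, n) :: ·))) fun w => ?_),
    Nat.card_eq_finsetCard, Finset.card_image_of_injective _ List.cons_injective,
    card_lowerings_wITail m (by omega) (by omega)]
  · congr 1 <;> omega
  · rw [← isPNF_and_forall₂_iff_mem_image_lowerings hu hsnd (by omega) (by omega),
      List.forall₂_iff_getD (0, 0) (0, 0), wI_of_eq_two_mul_add_two hm, and_assoc]

/-- For `n ≥ 2` even and `0 ≤ r ≤ n-1`: the number `i_{n,r}` of positive normal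
forms obtained from `w_n^I` by lowering left endpoints of its blocks (no blocks added),
with leftmost block starting at `n-1-r`, equals `C(n-2-r, r)`. -/
theorem count_lowerings_wI (n r : ℤ) (hn : 2 ≤ n) (hev : Even n)
    (hr0 : 0 ≤ r) (hr : r ≤ n - 1) :
    Nat.card {w : List (ℤ × ℤ) // IsPNF n w ∧ w.length = (wI n).length ∧
      (∀ i < (wI n).length, (w.getD i (0, 0)).2 = ((wI n).getD i (0, 0)).2 ∧
        (w.getD i (0, 0)).1 ≤ ((wI n).getD i (0, 0)).1) ∧
      (w.getD 0 (0, 0)).1 = n - 1 - r} = blobbedC (n - 2 - r) r :=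
  count_lowerings_wI_general n r hev hr0 hr
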